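/- arXiv:0811.0366 — 4 statements merged into one kernel-verified Lean document; each statement's English description precedes it below -/
import Mathlib

section
/- (Drift identity and centering of the local drift.) Define the local drift Δ(ω,u) = ∫_ℝ α (∫_Λ κ^ω_{0,u} Φ^ω(0,u,α,v) dμ^ω_α(v)) dα, and assume the first-moment condition ⟨∫_ℝ |α| (∫_Λ κ^ω_{0,u} Φ^ω(0,u,α,v) dμ^ω_α(v)) dα⟩_Q < ∞. Then for every bounded measurable g : Ω×Λ → ℝ, ⟨g, Δ⟩_Q = (1/(2Z)) ∫_ℝ α dα ∫_Ω dP(ω) ∫_{Λ×Λ} Φ^ω(0,u,α,v) (g(ω,u) − g(θ_α ω, v)) dμ^ω_0(u) dμ^ω_α(v). In particular (taking g ≡ 1) the drift has mean zero under the equilibrium law: ⟨Δ⟩_Q = 0. -/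
open MeasureTheory ProbabilityTheory Function
open scoped ENNReal

/-!
Cancelling `κ`, the left-hand side is `Z⁻¹ ∫ α A(α) dα` with
`A(α) = ∫∫ g(ω,u) m(ω,u,α) dμ^ω_0(u) dP(ω)` and `m(ω,u,α) = ∫ Φ^ω(0,u,α,v) dμ^ω_α(v)`; the
first-moment condition is what Fubini needs here. For almost every `α` the `α`-slice of the
right-hand side splits as `A(α) - B(α)`, where `B` evaluates `g` at the end point of the jump.
A jump of length `α` from `ω` is a jump of length `-α` from `θ_α ω` read backwards, so
shift-covariance of `μ` and `Φ`, symmetry of `Φ` and invariance of `P` under `θ_α` give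
`B(α) = A(-α)`. Hence the right-hand side is `(2Z)⁻¹ ∫ α (A(α) - A(-α)) dα = Z⁻¹ ∫ α A(α) dα`,
and `g ≡ 1` makes it vanish.
-/

lemma ProbabilityTheory.Kernel.isSFiniteKernel_of_isFiniteMeasure {α β : Type*}
    [MeasurableSpace α] [MeasurableSpace β] (κ : Kernel α β) [∀ a, IsFiniteMeasure (κ a)] :
    IsSFiniteKernel κ := by
  classical
  set N : α → ℕ := fun a => ⌊(κ a Set.univ).toReal⌋₊
  have hN : Measurable N := (κ.measurable_coe MeasurableSet.univ).ennreal_toReal.nat_floor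
  have hpiece (n : ℕ) : IsFiniteKernel (κ.piecewise (hN (measurableSet_singleton n)) 0) := by
    refine ⟨n + 1, by finiteness, fun a => ?_⟩
    rw [Kernel.piecewise_apply]
    split_ifs with ha
    · have hlt : (κ a Set.univ).toReal < N a + 1 := Nat.lt_floor_add_one _
      simp only [Set.mem_preimage, Set.mem_singleton_iff] at ha
      calc κ a Set.univ = ENNReal.ofReal (κ a Set.univ).toReal := by simp
        _ ≤ ENNReal.ofReal (n + 1) := ENNReal.ofReal_le_ofReal (ha ▸ hlt.le)
        _ = n + 1 := by rw [ENNReal.ofReal_add (by positivity) zero_le_one]; simp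
    · simp
  have hsum : κ = Kernel.sum fun n => κ.piecewise (hN (measurableSet_singleton n)) 0 := by
    ext a s hs
    rw [Kernel.sum_apply' _ _ hs]
    simp only [Kernel.piecewise_apply, Set.mem_preimage, Set.mem_singleton_iff]
    rw [tsum_eq_single (N a) fun n hn => by simp [Ne.symm hn]]
    simp
  rw [hsum]
  infer_instance

lemma integral_mul_sub_comp_neg {f : ℝ → ℝ} (hf : Integrable fun x => x * f x) :
    ∫ x, x * (f x - f (-x)) = 2 * ∫ x, x * f x := by
  have hneg : ∫ x, x * f (-x) = -∫ x, x * f x := by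
    simpa [integral_neg] using integral_neg_eq_self (fun x => -x * f x) volume
  have hf' : Integrable fun x => x * f (-x) := by
    simpa using (hf.comp_neg).neg
  simp only [mul_sub]
  rw [integral_sub hf hf', hneg]
  ring

lemma MeasureTheory.Measure.integrable_integral_compProd {α β E : Type*} [MeasurableSpace α]
    [MeasurableSpace β] [NormedAddCommGroup E] [NormedSpace ℝ E] {μ : Measure α} [SFinite μ]
    {κ : Kernel α β} [IsSFiniteKernel κ] {f : α × β → E} (hf : Integrable f (μ ⊗ₘ κ)) :
    Integrable (fun a => ∫ b, f (a, b) ∂κ a) μ := by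
  simpa [Measure.compProd] using (hf.integral_compProd (a := ()) : _)

lemma MeasureTheory.MeasurePreserving.integral_comp_of_aestronglyMeasurable {α β E : Type*}
    [MeasurableSpace α] [MeasurableSpace β] [NormedAddCommGroup E] [NormedSpace ℝ E]
    {μ : Measure α} {ν : Measure β} {f : α → β} (hf : MeasurePreserving f μ ν) {g : β → E}
    (hg : AEStronglyMeasurable g ν) : ∫ x, g (f x) ∂μ = ∫ y, g y ∂ν := by
  rw [← hf.map_eq] at hg ⊢
  exact (integral_map hf.measurable.aemeasurable hg).symm

section Fubini

variable {α β : Type*} [MeasurableSpace α] [MeasurableSpace β] {μ : Measure α} {ν : Measure β}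
  [SFinite μ] [SFinite ν] {f : α × β → ℝ}

lemma integral_mul_integral_eq_integral_prod (hf : Integrable f (μ.prod ν)) {g : α → ℝ}
    (hg : Measurable g) {C : ℝ} (hC : ∀ x, ‖g x‖ ≤ C) :
    ∫ x, g x * ∫ y, f (x, y) ∂ν ∂μ = ∫ z, f z * g z.1 ∂μ.prod ν := by
  have h : Integrable (fun z : α × β => f z * g z.1) (μ.prod ν) :=
    hf.mul_bdd (hg.comp measurable_fst).aestronglyMeasurable (ae_of_all _ fun z => hC z.1)
  rw [integral_prod _ h]
  simp_rw [integral_mul_const, mul_comm]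

lemma integral_integral_mul_sub (hf : Integrable f (μ.prod ν)) {g₁ : α → ℝ} {g₂ : β → ℝ}
    (hg₁ : Measurable g₁) (hg₂ : Measurable g₂) {C : ℝ} (hC₁ : ∀ x, ‖g₁ x‖ ≤ C)
    (hC₂ : ∀ y, ‖g₂ y‖ ≤ C) :
    ∫ x, ∫ y, f (x, y) * (g₁ x - g₂ y) ∂ν ∂μ =
      ∫ z, f z * g₁ z.1 ∂μ.prod ν - ∫ z, f z * g₂ z.2 ∂μ.prod ν := by
  have h₁ : Integrable (fun z : α × β => f z * g₁ z.1) (μ.prod ν) :=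
    hf.mul_bdd (hg₁.comp measurable_fst).aestronglyMeasurable (ae_of_all _ fun z => hC₁ z.1)
  have h₂ : Integrable (fun z : α × β => f z * g₂ z.2) (μ.prod ν) :=
    hf.mul_bdd (hg₂.comp measurable_snd).aestronglyMeasurable (ae_of_all _ fun z => hC₂ z.2)
  rw [← integral_sub h₁ h₂, integral_prod (fun z => f z * g₁ z.1 - f z * g₂ z.2) (h₁.sub h₂)]
  simp only [mul_sub]

end Fubini

lemma integral_mul_mul_toReal_eq {X : Type*} [MeasurableSpace X] (ν : Measure X) (g : X → ℝ)
    (L : X → ℝ → ℝ≥0∞) (α : ℝ) :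
    ∫ x, g x * (α * (L x α).toReal) ∂ν = α * ∫ x, g x * (L x α).toReal ∂ν := by
  rw [← integral_const_mul]
  simp_rw [mul_left_comm]

section FirstMoment

variable {X : Type*} [MeasurableSpace X] {ν : Measure X} {L : X → ℝ → ℝ≥0∞}
  {g : X → ℝ} {C : ℝ}

lemma ae_lintegral_lt_top_of_lintegral_ofReal_abs_mul_ne_top [SFinite ν]
    (hL : Measurable (uncurry L))
    (hmom : ∫⁻ x, (∫⁻ α : ℝ, ENNReal.ofReal |α| * L x α) ∂ν ≠ ∞) :
    ∀ᵐ α, ∫⁻ x, L x α ∂ν < ∞ := by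
  have hm : Measurable fun α => ∫⁻ x, L x α ∂ν :=
    (hL.comp measurable_swap).lintegral_prod_right'
  have hswap : ∫⁻ α, ENNReal.ofReal |α| * ∫⁻ x, L x α ∂ν ≠ ∞ := by
    simp_rw [← lintegral_const_mul' _ _ ENNReal.ofReal_ne_top]
    rwa [lintegral_lintegral_swap (by fun_prop)]
  filter_upwards [ae_lt_top (by fun_prop) hswap, volume.ae_ne 0] with α hα hα0
  refine lt_top_iff_ne_top.2 fun htop => hα.ne ?_
  rw [htop, ENNReal.mul_top (by simpa using hα0)]

lemma integrable_prod_mul_mul_toReal (hL : Measurable (uncurry L))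
    (hmom : ∫⁻ x, (∫⁻ α : ℝ, ENNReal.ofReal |α| * L x α) ∂ν ≠ ∞) (hg : Measurable g)
    (hC : ∀ x, ‖g x‖ ≤ C) :
    Integrable (fun p : X × ℝ => g p.1 * (p.2 * (L p.1 p.2).toReal)) (ν.prod volume) := by
  have hint : Integrable (fun p : X × ℝ => (ENNReal.ofReal |p.2| * L p.1 p.2).toReal)
      (ν.prod volume) := by
    refine integrable_toReal_of_lintegral_ne_top (by fun_prop) ?_
    rwa [lintegral_prod _ (by fun_prop)]
  refine Integrable.bdd_mul ?_ (hg.comp measurable_fst).aestronglyMeasurable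
    (ae_of_all _ fun p => hC p.1)
  refine hint.mono' (by fun_prop) (ae_of_all _ fun p => ?_)
  simp [ENNReal.toReal_mul, abs_nonneg]

lemma integrable_mul_integral_mul_toReal_left [SFinite ν] (hL : Measurable (uncurry L))
    (hmom : ∫⁻ x, (∫⁻ α : ℝ, ENNReal.ofReal |α| * L x α) ∂ν ≠ ∞) (hg : Measurable g)
    (hC : ∀ x, ‖g x‖ ≤ C) :
    Integrable (fun x => g x * ∫ α, α * (L x α).toReal) ν :=
  (integrable_prod_mul_mul_toReal hL hmom hg hC).integral_prod_left.congr
    (ae_of_all _ fun _ => by dsimp only; exact integral_const_mul _ _)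

lemma integrable_mul_integral_mul_toReal_right [SFinite ν] (hL : Measurable (uncurry L))
    (hmom : ∫⁻ x, (∫⁻ α : ℝ, ENNReal.ofReal |α| * L x α) ∂ν ≠ ∞) (hg : Measurable g)
    (hC : ∀ x, ‖g x‖ ≤ C) :
    Integrable fun α => α * ∫ x, g x * (L x α).toReal ∂ν :=
  (integrable_prod_mul_mul_toReal hL hmom hg hC).swap.integral_prod_left.congr
    (ae_of_all _ (integral_mul_mul_toReal_eq ν g L))

lemma integral_mul_integral_mul_toReal_comm [SFinite ν] (hL : Measurable (uncurry L))
    (hmom : ∫⁻ x, (∫⁻ α : ℝ, ENNReal.ofReal |α| * L x α) ∂ν ≠ ∞) (hg : Measurable g)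
    (hC : ∀ x, ‖g x‖ ≤ C) :
    ∫ x, g x * (∫ α, α * (L x α).toReal) ∂ν = ∫ α, α * ∫ x, g x * (L x α).toReal ∂ν := by
  calc ∫ x, g x * (∫ α, α * (L x α).toReal) ∂ν
      = ∫ x, (∫ α, g x * (α * (L x α).toReal)) ∂ν := by simp_rw [integral_const_mul]
    _ = ∫ α, ∫ x, g x * (α * (L x α).toReal) ∂ν :=
      integral_integral_swap (integrable_prod_mul_mul_toReal hL hmom hg hC)
    _ = ∫ α, α * ∫ x, g x * (L x α).toReal ∂ν := by simp_rw [integral_mul_mul_toReal_eq]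

end FirstMoment

lemma integral_prod_flow_reverse {Ω Λ : Type*} [MeasurableSpace Λ] {μ : Ω → ℝ → Measure Λ}
    [∀ ω α, IsFiniteMeasure (μ ω α)] {Φ : Ω → ℝ → Λ → ℝ → Λ → ℝ} {θ : ℝ → Ω → Ω}
    (hμshift : ∀ γ ω α, μ (θ γ ω) α = μ ω (α + γ))
    (hΦsymm : ∀ ω α u β v, Φ ω α u β v = Φ ω β v α u)
    (hΦshift : ∀ γ ω α u β v, Φ (θ γ ω) α u β v = Φ ω (α + γ) u (β + γ) v)
    (ω : Ω) (α : ℝ) (G : Λ → ℝ) :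
    ∫ z, Φ (θ α ω) 0 z.1 (-α) z.2 * G z.1 ∂(μ (θ α ω) 0).prod (μ (θ α ω) (-α)) =
      ∫ z, Φ ω 0 z.1 α z.2 * G z.2 ∂(μ ω 0).prod (μ ω α) := by
  rw [hμshift, hμshift, zero_add, neg_add_cancel, ← integral_prod_swap]
  refine integral_congr_ae (ae_of_all _ fun z => ?_)
  dsimp only [Prod.fst_swap, Prod.snd_swap]
  rw [hΦshift, zero_add, neg_add_cancel, hΦsymm]

section Environment

variable {Ω Λ : Type*} [MeasurableSpace Ω] [MeasurableSpace Λ] {μ : Ω → ℝ → Measure Λ}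

def boundaryKernel (hμ : ∀ s : Set Λ, MeasurableSet s → Measurable fun p : Ω × ℝ => μ p.1 p.2 s) :
    Kernel (Ω × ℝ) Λ :=
  ⟨fun p => μ p.1 p.2, Measure.measurable_of_measurable_coe _ hμ⟩

/-- The equilibrium law `Q` has density `Z⁻¹ κ⁻¹` with respect to this measure. -/
noncomputable def boundaryMeasure
    (hμ : ∀ s : Set Λ, MeasurableSet s → Measurable fun p : Ω × ℝ => μ p.1 p.2 s)
    (P : Measure Ω) : Measure (Ω × Λ) :=
  P ⊗ₘ (boundaryKernel hμ).comap (fun ω => (ω, 0)) measurable_prodMk_right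

/-- The density in `α` of the jump length of `G` from `x`, divided by `κ^ω_{0,u}`. -/
noncomputable def jumpMass (μ : Ω → ℝ → Measure Λ) (Φ : Ω → ℝ → Λ → ℝ → Λ → ℝ) (x : Ω × Λ)
    (α : ℝ) : ℝ≥0∞ :=
  ∫⁻ v, ENNReal.ofReal (Φ x.1 0 x.2 α v) ∂μ x.1 α

lemma integral_eq_toReal_jumpMass
    (hΦ : Measurable fun p : Ω × ℝ × Λ × ℝ × Λ => Φ p.1 p.2.1 p.2.2.1 p.2.2.2.1 p.2.2.2.2)
    (hΦnonneg : ∀ ω α u β v, 0 ≤ Φ ω α u β v) (x : Ω × Λ) (α : ℝ) :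
    ∫ v, Φ x.1 0 x.2 α v ∂μ x.1 α = (jumpMass μ Φ x α).toReal :=
  integral_eq_lintegral_of_nonneg_ae (ae_of_all _ fun _ => hΦnonneg ..)
    (hΦ.comp (f := fun v => (x.1, 0, x.2, α, v)) (by fun_prop)).aestronglyMeasurable

variable [∀ ω α, IsFiniteMeasure (μ ω α)]
  {hμ : ∀ s : Set Λ, MeasurableSet s → Measurable fun p : Ω × ℝ => μ p.1 p.2 s}
  {P : Measure Ω} {Φ : Ω → ℝ → Λ → ℝ → Λ → ℝ}

instance : IsSFiniteKernel (boundaryKernel hμ) :=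
  have (p : Ω × ℝ) : IsFiniteMeasure (boundaryKernel hμ p) :=
    inferInstanceAs (IsFiniteMeasure (μ p.1 p.2))
  Kernel.isSFiniteKernel_of_isFiniteMeasure _

instance [SFinite P] : SFinite (boundaryMeasure hμ P) := by
  unfold boundaryMeasure
  infer_instance

lemma measurable_jumpMass
    (hμ : ∀ s : Set Λ, MeasurableSet s → Measurable fun p : Ω × ℝ => μ p.1 p.2 s)
    (hΦ : Measurable fun p : Ω × ℝ × Λ × ℝ × Λ => Φ p.1 p.2.1 p.2.2.1 p.2.2.2.1 p.2.2.2.2) :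
    Measurable (uncurry (jumpMass μ Φ)) :=
  Measurable.lintegral_kernel_prod_right'
    (κ := (boundaryKernel hμ).comap (fun q : (Ω × Λ) × ℝ => (q.1.1, q.2)) (by fun_prop))
    (f := fun r => ENNReal.ofReal (Φ r.1.1.1 0 r.1.1.2 r.1.2 r.2))
    (hΦ.comp (f := fun r : ((Ω × Λ) × ℝ) × Λ => (r.1.1.1, 0, r.1.1.2, r.1.2, r.2))
      (by fun_prop)).ennreal_ofReal

lemma ofReal_inv_mul_lintegral_mul_lintegral_ofReal_mul {β : Type*} [MeasurableSpace β] {c : ℝ}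
    (hc : 0 < c) (a : ℝ → ℝ≥0∞) (ρ : ℝ → Measure β) (f : ℝ → β → ℝ) :
    ENNReal.ofReal c⁻¹ * ∫⁻ α, a α * ∫⁻ v, ENNReal.ofReal (c * f α v) ∂ρ α =
      ∫⁻ α, a α * ∫⁻ v, ENNReal.ofReal (f α v) ∂ρ α := by
  simp_rw [ENNReal.ofReal_mul hc.le, lintegral_const_mul' _ _ ENNReal.ofReal_ne_top,
    mul_left_comm (a _), lintegral_const_mul' _ _ ENNReal.ofReal_ne_top, ← mul_assoc,
    ← ENNReal.ofReal_mul (inv_nonneg.2 hc.le), inv_mul_cancel₀ hc.ne', ENNReal.ofReal_one, one_mul]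

lemma lintegral_ofReal_abs_mul_jumpMass_ne_top [SFinite P]
    (hΦ : Measurable fun p : Ω × ℝ × Λ × ℝ × Λ => Φ p.1 p.2.1 p.2.2.1 p.2.2.2.1 p.2.2.2.2)
    {κ : Ω → ℝ → Λ → ℝ} (hκ : ∀ ω u, 0 < κ ω 0 u)
    (hmom : (∫⁻ ω, (∫⁻ u, ENNReal.ofReal ((κ ω 0 u)⁻¹) *
        (∫⁻ α : ℝ, ENNReal.ofReal |α| *
          (∫⁻ v, ENNReal.ofReal (κ ω 0 u * Φ ω 0 u α v) ∂(μ ω α))) ∂(μ ω 0)) ∂P) < ⊤) :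
    ∫⁻ x, (∫⁻ α : ℝ, ENNReal.ofReal |α| * jumpMass μ Φ x α) ∂boundaryMeasure hμ P ≠ ∞ := by
  have hm : Measurable fun x => ∫⁻ α : ℝ, ENNReal.ofReal |α| * jumpMass μ Φ x α :=
    ((by fun_prop : Measurable fun p : (Ω × Λ) × ℝ => ENNReal.ofReal |p.2|).mul
      (measurable_jumpMass hμ hΦ)).lintegral_prod_right'
  rw [boundaryMeasure, Measure.lintegral_compProd hm]
  refine (lintegral_congr fun ω => lintegral_congr fun u => ?_).trans_ne hmom.ne
  exact (ofReal_inv_mul_lintegral_mul_lintegral_ofReal_mul (hκ ω u) _ _ _).symm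

lemma ae_integrable_prod_of_lintegral_jumpMass_ne_top [SFinite P]
    (hΦ : Measurable fun p : Ω × ℝ × Λ × ℝ × Λ => Φ p.1 p.2.1 p.2.2.1 p.2.2.2.1 p.2.2.2.2)
    (hΦnonneg : ∀ ω α u β v, 0 ≤ Φ ω α u β v) {α : ℝ}
    (hα : ∫⁻ x, jumpMass μ Φ x α ∂boundaryMeasure hμ P ≠ ∞) :
    ∀ᵐ ω ∂P, Integrable (fun z : Λ × Λ => Φ ω 0 z.1 α z.2) ((μ ω 0).prod (μ ω α)) := by
  have hL : Measurable fun x => jumpMass μ Φ x α :=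
    (measurable_jumpMass hμ hΦ).comp (f := fun x => (x, α)) (by fun_prop)
  rw [boundaryMeasure, Measure.lintegral_compProd hL] at hα
  filter_upwards [ae_lt_top hL.lintegral_kernel_prod_right' hα] with ω hω
  have hm : Measurable fun z : Λ × Λ => Φ ω 0 z.1 α z.2 :=
    hΦ.comp (f := fun z : Λ × Λ => (ω, 0, z.1, α, z.2)) (by fun_prop)
  rw [← lintegral_ofReal_ne_top_iff_integrable hm.aestronglyMeasurable
    (ae_of_all _ fun _ => hΦnonneg ..), lintegral_prod _ hm.ennreal_ofReal.aemeasurable]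
  exact hω.ne

lemma integrable_mul_toReal_jumpMass
    (hΦ : Measurable fun p : Ω × ℝ × Λ × ℝ × Λ => Φ p.1 p.2.1 p.2.2.1 p.2.2.2.1 p.2.2.2.2)
    {α : ℝ} (hα : ∫⁻ x, jumpMass μ Φ x α ∂boundaryMeasure hμ P ≠ ∞) {g : Ω × Λ → ℝ}
    (hg : Measurable g) {C : ℝ} (hC : ∀ x, ‖g x‖ ≤ C) :
    Integrable (fun x => g x * (jumpMass μ Φ x α).toReal) (boundaryMeasure hμ P) :=
  (integrable_toReal_of_lintegral_ne_top ((measurable_jumpMass hμ hΦ).comp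
    (f := fun x => (x, α)) (by fun_prop)).aemeasurable hα).bdd_mul
      hg.aestronglyMeasurable (ae_of_all _ hC)

lemma integral_increment_eq_sub_reverse [SFinite P]
    (hΦ : Measurable fun p : Ω × ℝ × Λ × ℝ × Λ => Φ p.1 p.2.1 p.2.2.1 p.2.2.2.1 p.2.2.2.2)
    (hΦnonneg : ∀ ω α u β v, 0 ≤ Φ ω α u β v)
    (hΦsymm : ∀ ω α u β v, Φ ω α u β v = Φ ω β v α u)
    {θ : ℝ → Ω → Ω} (hθP : ∀ γ, MeasurePreserving (θ γ) P P)
    (hμshift : ∀ γ ω α, μ (θ γ ω) α = μ ω (α + γ))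
    (hΦshift : ∀ γ ω α u β v, Φ (θ γ ω) α u β v = Φ ω (α + γ) u (β + γ) v)
    {α : ℝ} (hα : ∫⁻ x, jumpMass μ Φ x α ∂boundaryMeasure hμ P ≠ ∞)
    (hα' : ∫⁻ x, jumpMass μ Φ x (-α) ∂boundaryMeasure hμ P ≠ ∞)
    {g : Ω × Λ → ℝ} (hg : Measurable g) {C : ℝ} (hC : ∀ x, ‖g x‖ ≤ C) :
    ∫ ω, ∫ u, ∫ v, Φ ω 0 u α v * (g (ω, u) - g (θ α ω, v)) ∂(μ ω α) ∂(μ ω 0) ∂P =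
      ∫ x, g x * (jumpMass μ Φ x α).toReal ∂boundaryMeasure hμ P -
        ∫ x, g x * (jumpMass μ Φ x (-α)).toReal ∂boundaryMeasure hμ P := by
  have hgω (ω : Ω) : Measurable fun u => g (ω, u) := hg.comp measurable_prodMk_left
  set a : ℝ → Ω → ℝ := fun β ω => ∫ u, g (ω, u) * (jumpMass μ Φ (ω, u) β).toReal ∂μ ω 0
  have ha (β : ℝ) (hβ : ∫⁻ x, jumpMass μ Φ x β ∂boundaryMeasure hμ P ≠ ∞) :
      Integrable (a β) P ∧
        ∫ ω, a β ω ∂P = ∫ x, g x * (jumpMass μ Φ x β).toReal ∂boundaryMeasure hμ P := by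
    have h := integrable_mul_toReal_jumpMass hΦ hβ hg hC
    exact ⟨Measure.integrable_integral_compProd h, (Measure.integral_compProd h).symm⟩
  have ha_prod (β : ℝ) (ω : Ω)
      (hω : Integrable (fun z : Λ × Λ => Φ ω 0 z.1 β z.2) ((μ ω 0).prod (μ ω β))) :
      a β ω = ∫ z, Φ ω 0 z.1 β z.2 * g (ω, z.1) ∂(μ ω 0).prod (μ ω β) := by
    rw [← integral_mul_integral_eq_integral_prod hω (hgω ω) (fun _ => hC _)]
    simp_rw [a, ← integral_eq_toReal_jumpMass hΦ hΦnonneg]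
  have hslice : ∀ᵐ ω ∂P, ∫ u, ∫ v, Φ ω 0 u α v * (g (ω, u) - g (θ α ω, v)) ∂μ ω α ∂μ ω 0 =
      a α ω - a (-α) (θ α ω) := by
    have h₁ := ae_integrable_prod_of_lintegral_jumpMass_ne_top hΦ hΦnonneg hα
    have h₂ := ae_integrable_prod_of_lintegral_jumpMass_ne_top hΦ hΦnonneg hα'
    filter_upwards [h₁, (hθP α).quasiMeasurePreserving.ae h₂] with ω h₁ h₂
    rw [integral_integral_mul_sub h₁ (hgω ω) (hgω (θ α ω)) (fun _ => hC _) (fun _ => hC _),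
      ha_prod α ω h₁, ha_prod (-α) (θ α ω) h₂,
      integral_prod_flow_reverse hμshift hΦsymm hΦshift ω α fun v => g (θ α ω, v)]
  obtain ⟨hi, he⟩ := ha α hα
  obtain ⟨hi', he'⟩ := ha (-α) hα'
  have hi'' : Integrable (fun ω => a (-α) (θ α ω)) P :=
    (hθP α).integrable_comp_of_integrable hi'
  rw [integral_congr_ae hslice, integral_sub hi hi'',
    (hθP α).integral_comp_of_aestronglyMeasurable hi'.aestronglyMeasurable, he, he']

lemma inv_mul_mul_integral_mul_integral_const_mul {β : Type*} [MeasurableSpace β] {c : ℝ}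
    (hc : c ≠ 0) (b : ℝ) (ρ : ℝ → Measure β) (f : ℝ → β → ℝ) :
    c⁻¹ * (b * ∫ α, α * ∫ v, c * f α v ∂ρ α) = b * ∫ α, α * ∫ v, f α v ∂ρ α := by
  simp_rw [integral_const_mul, mul_left_comm _ c, integral_const_mul]
  field_simp

lemma integral_inv_mul_drift_eq [SFinite P]
    (hΦ : Measurable fun p : Ω × ℝ × Λ × ℝ × Λ => Φ p.1 p.2.1 p.2.2.1 p.2.2.2.1 p.2.2.2.2)
    (hΦnonneg : ∀ ω α u β v, 0 ≤ Φ ω α u β v) {κ : Ω → ℝ → Λ → ℝ} (hκ : ∀ ω u, κ ω 0 u ≠ 0)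
    {g : Ω × Λ → ℝ}
    (hint : Integrable (fun x => g x * ∫ α, α * (jumpMass μ Φ x α).toReal)
      (boundaryMeasure hμ P)) :
    ∫ ω, ∫ u, (κ ω 0 u)⁻¹ * (g (ω, u) *
        (∫ α : ℝ, α * ∫ v, κ ω 0 u * Φ ω 0 u α v ∂(μ ω α))) ∂(μ ω 0) ∂P =
      ∫ x, g x * (∫ α, α * (jumpMass μ Φ x α).toReal) ∂boundaryMeasure hμ P := by
  rw [boundaryMeasure, Measure.integral_compProd hint]
  refine integral_congr_ae (ae_of_all _ fun ω => integral_congr_ae (ae_of_all _ fun u => ?_))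
  simp only [inv_mul_mul_integral_mul_integral_const_mul (hκ ω u),
    integral_eq_toReal_jumpMass hΦ hΦnonneg (ω, u)]

lemma two_mul_integral_mul_drift_eq [SFinite P]
    (hμ : ∀ s : Set Λ, MeasurableSet s → Measurable fun p : Ω × ℝ => μ p.1 p.2 s)
    (hΦ : Measurable fun p : Ω × ℝ × Λ × ℝ × Λ => Φ p.1 p.2.1 p.2.2.1 p.2.2.2.1 p.2.2.2.2)
    (hΦnonneg : ∀ ω α u β v, 0 ≤ Φ ω α u β v)
    (hΦsymm : ∀ ω α u β v, Φ ω α u β v = Φ ω β v α u)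
    {θ : ℝ → Ω → Ω} (hθP : ∀ γ, MeasurePreserving (θ γ) P P)
    (hμshift : ∀ γ ω α, μ (θ γ ω) α = μ ω (α + γ))
    (hΦshift : ∀ γ ω α u β v, Φ (θ γ ω) α u β v = Φ ω (α + γ) u (β + γ) v)
    {κ : Ω → ℝ → Λ → ℝ} (hκ : ∀ ω u, 0 < κ ω 0 u)
    (hmom : (∫⁻ ω, (∫⁻ u, ENNReal.ofReal ((κ ω 0 u)⁻¹) *
        (∫⁻ α : ℝ, ENNReal.ofReal |α| *
          (∫⁻ v, ENNReal.ofReal (κ ω 0 u * Φ ω 0 u α v) ∂(μ ω α))) ∂(μ ω 0)) ∂P) < ⊤)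
    {g : Ω × Λ → ℝ} (hg : Measurable g) {C : ℝ} (hC : ∀ x, ‖g x‖ ≤ C) :
    2 * ∫ ω, ∫ u, (κ ω 0 u)⁻¹ * (g (ω, u) *
        (∫ α : ℝ, α * ∫ v, κ ω 0 u * Φ ω 0 u α v ∂(μ ω α))) ∂(μ ω 0) ∂P =
      ∫ α : ℝ, α * ∫ ω, ∫ u, ∫ v,
        Φ ω 0 u α v * (g (ω, u) - g (θ α ω, v)) ∂(μ ω α) ∂(μ ω 0) ∂P := by
  have hL := measurable_jumpMass hμ hΦ
  have hM := lintegral_ofReal_abs_mul_jumpMass_ne_top (hμ := hμ) hΦ hκ hmom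
  have hgood := ae_lintegral_lt_top_of_lintegral_ofReal_abs_mul_ne_top hL hM
  have hslice : ∀ᵐ α : ℝ, α * (∫ ω, ∫ u, ∫ v,
      Φ ω 0 u α v * (g (ω, u) - g (θ α ω, v)) ∂(μ ω α) ∂(μ ω 0) ∂P) =
        α * (∫ x, g x * (jumpMass μ Φ x α).toReal ∂boundaryMeasure hμ P -
          ∫ x, g x * (jumpMass μ Φ x (-α)).toReal ∂boundaryMeasure hμ P) := by
    filter_upwards [hgood,
      (Measure.measurePreserving_neg volume).quasiMeasurePreserving.ae hgood] with α h h'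
    rw [integral_increment_eq_sub_reverse hΦ hΦnonneg hΦsymm hθP hμshift hΦshift h.ne h'.ne
      hg hC]
  rw [integral_inv_mul_drift_eq hΦ hΦnonneg (fun ω u => (hκ ω u).ne')
      (integrable_mul_integral_mul_toReal_left hL hM hg hC),
    integral_mul_integral_mul_toReal_comm hL hM hg hC, integral_congr_ae hslice,
    integral_mul_sub_comp_neg (integrable_mul_integral_mul_toReal_right hL hM hg hC)]

end Environment

theorem drift_identity_and_centering_general
    {d : ℕ}
    (Λ : Set (EuclideanSpace ℝ (Fin (d + 1))))
    {Ω : Type*} [MeasurableSpace Ω] (P : Measure Ω) [IsProbabilityMeasure P]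
    (θ : ℝ → Ω → Ω)
    (hθP : ∀ γ : ℝ, MeasurePreserving (θ γ) P P)
    (μ : Ω → ℝ → Measure Λ)
    (hμfin : ∀ ω α, IsFiniteMeasure (μ ω α))
    (hμmeas : ∀ s : Set Λ, MeasurableSet s → Measurable fun p : Ω × ℝ => μ p.1 p.2 s)
    (hμshift : ∀ γ ω α, μ (θ γ ω) α = μ ω (α + γ))
    (κ : Ω → ℝ → Λ → ℝ)
    (hκmem : ∀ ω α u, κ ω α u ∈ Set.Ioc (0 : ℝ) 1)
    (Φ : Ω → ℝ → Λ → ℝ → Λ → ℝ)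
    (hΦmeas : Measurable fun p : Ω × ℝ × Λ × ℝ × Λ =>
      Φ p.1 p.2.1 p.2.2.1 p.2.2.2.1 p.2.2.2.2)
    (hΦnonneg : ∀ ω α u β v, 0 ≤ Φ ω α u β v)
    (hΦsymm : ∀ ω α u β v, Φ ω α u β v = Φ ω β v α u)
    (hΦshift : ∀ γ ω α u β v, Φ (θ γ ω) α u β v = Φ ω (α + γ) u (β + γ) v)
    (Z : ℝ)
    (hmom : (∫⁻ ω, (∫⁻ u, ENNReal.ofReal ((κ ω 0 u)⁻¹) *
        (∫⁻ α : ℝ, ENNReal.ofReal |α| *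
          (∫⁻ v, ENNReal.ofReal (κ ω 0 u * Φ ω 0 u α v) ∂(μ ω α))) ∂(μ ω 0)) ∂P) < ⊤) :
    (∀ g : Ω × Λ → ℝ, Measurable g → (∃ C, ∀ x, |g x| ≤ C) →
      Z⁻¹ * (∫ ω, ∫ u, (κ ω 0 u)⁻¹ * (g (ω, u) *
          (∫ α : ℝ, α * ∫ v, κ ω 0 u * Φ ω 0 u α v ∂(μ ω α))) ∂(μ ω 0) ∂P)
        =
      (2 * Z)⁻¹ * (∫ α : ℝ, α * ∫ ω, ∫ u, ∫ v,
          Φ ω 0 u α v * (g (ω, u) - g (θ α ω, v)) ∂(μ ω α) ∂(μ ω 0) ∂P))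
    ∧
    Z⁻¹ * (∫ ω, ∫ u, (κ ω 0 u)⁻¹ *
        (∫ α : ℝ, α * ∫ v, κ ω 0 u * Φ ω 0 u α v ∂(μ ω α)) ∂(μ ω 0) ∂P) = 0 := by
  have hκ (ω : Ω) (u : Λ) : 0 < κ ω 0 u := (hκmem ω 0 u).1
  refine ⟨fun g hg ⟨C, hC⟩ => ?_, ?_⟩
  · rw [← two_mul_integral_mul_drift_eq hμmeas hΦmeas hΦnonneg hΦsymm hθP hμshift hΦshift hκ
      hmom hg fun x => (Real.norm_eq_abs _).trans_le (hC x), mul_inv]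
    ring
  · refine mul_eq_zero_of_right _ ?_
    simpa using two_mul_integral_mul_drift_eq hμmeas hΦmeas hΦnonneg hΦsymm hθP hμshift
      hΦshift hκ hmom (g := fun _ => 1) measurable_const (C := 1) fun _ => by simp

/-- **Drift identity and centering of the local drift.** Under the first-moment
condition, for every bounded measurable `g`,
`⟨g, Δ⟩_Q = (1/(2Z)) ∫ α dα ∫ dP ∫∫ Φ (g(ω,u) − g(θ_α ω,v)) dμ₀ dμ_α`;
in particular `⟨Δ⟩_Q = 0`. -/
theorem drift_identity_and_centering
    {d : ℕ}
    (Λ : Set (EuclideanSpace ℝ (Fin (d + 1)))) (hΛ : IsCompact Λ)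
    {Ω : Type*} [MeasurableSpace Ω] (P : Measure Ω) [IsProbabilityMeasure P]
    (θ : ℝ → Ω → Ω)
    (hθmeas : Measurable fun p : ℝ × Ω => θ p.1 p.2)
    (hθ0 : θ 0 = id)
    (hθadd : ∀ γ γ' : ℝ, θ (γ + γ') = θ γ ∘ θ γ')
    (hθP : ∀ γ : ℝ, MeasurePreserving (θ γ) P P)
    (μ : Ω → ℝ → Measure Λ)
    (hμfin : ∀ ω α, IsFiniteMeasure (μ ω α))
    (hμmeas : ∀ s : Set Λ, MeasurableSet s → Measurable fun p : Ω × ℝ => μ p.1 p.2 s)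
    (hμshift : ∀ γ ω α, μ (θ γ ω) α = μ ω (α + γ))
    (κ : Ω → ℝ → Λ → ℝ)
    (hκmeas : Measurable fun p : Ω × ℝ × Λ => κ p.1 p.2.1 p.2.2)
    (hκmem : ∀ ω α u, κ ω α u ∈ Set.Ioc (0 : ℝ) 1)
    (hκshift : ∀ γ ω α u, κ (θ γ ω) α u = κ ω (α + γ) u)
    (Φ : Ω → ℝ → Λ → ℝ → Λ → ℝ)
    (hΦmeas : Measurable fun p : Ω × ℝ × Λ × ℝ × Λ =>
      Φ p.1 p.2.1 p.2.2.1 p.2.2.2.1 p.2.2.2.2)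
    (hΦnonneg : ∀ ω α u β v, 0 ≤ Φ ω α u β v)
    (hΦsymm : ∀ ω α u β v, Φ ω α u β v = Φ ω β v α u)
    (hΦshift : ∀ γ ω α u β v, Φ (θ γ ω) α u β v = Φ ω (α + γ) u (β + γ) v)
    (hΦnorm : ∀ ω α, ∀ᵐ u ∂(μ ω α),
      (∫ β : ℝ, ∫ v, κ ω α u * Φ ω α u β v ∂(μ ω β)) = 1)
    (Z : ℝ) (hZpos : 0 < Z)
    (hZ : Z = ∫ ω, ∫ u, (κ ω 0 u)⁻¹ ∂(μ ω 0) ∂P)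
    (hmom : (∫⁻ ω, (∫⁻ u, ENNReal.ofReal ((κ ω 0 u)⁻¹) *
        (∫⁻ α : ℝ, ENNReal.ofReal |α| *
          (∫⁻ v, ENNReal.ofReal (κ ω 0 u * Φ ω 0 u α v) ∂(μ ω α))) ∂(μ ω 0)) ∂P) < ⊤) :
    (∀ g : Ω × Λ → ℝ, Measurable g → (∃ C, ∀ x, |g x| ≤ C) →
      Z⁻¹ * (∫ ω, ∫ u, (κ ω 0 u)⁻¹ * (g (ω, u) *
          (∫ α : ℝ, α * ∫ v, κ ω 0 u * Φ ω 0 u α v ∂(μ ω α))) ∂(μ ω 0) ∂P)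
        =
      (2 * Z)⁻¹ * (∫ α : ℝ, α * ∫ ω, ∫ u, ∫ v,
          Φ ω 0 u α v * (g (ω, u) - g (θ α ω, v)) ∂(μ ω α) ∂(μ ω 0) ∂P))
    ∧
    Z⁻¹ * (∫ ω, ∫ u, (κ ω 0 u)⁻¹ *
        (∫ α : ℝ, α * ∫ v, κ ω 0 u * Φ ω 0 u α v ∂(μ ω α)) ∂(μ ω 0) ∂P) = 0 :=
  drift_identity_and_centering_general Λ P θ hθP μ hμfin hμmeas hμshift κ hκmem Φ hΦmeas hΦnonneg
    hΦsymm hΦshift Z hmom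
end

section
/- (Core of Proposition 2.3: finite projected second moment in a straight cylinder, d ≥ 3.) Let d ≥ 3 and M > 0, and let C = {y ∈ ℝ^d : ‖y − (y·e₁)e₁‖ < M} be the open infinite circular cylinder about the first coordinate axis. For x ∈ ∂C let n(x) = −(x − (x·e₁)e₁)/M be the inward unit normal, and for h ∈ S^{d−1} with h·n(x) > 0 let ℓ(x,h) = inf{t > 0 : x + t h ∉ C} be the exit length of the ray from x in direction h (which is positive and finite when h·n(x) > 0). Then for every x ∈ ∂C the second moment of the horizontal displacement of the cosine-law chord is finite: ∫_{{h ∈ S^{d−1} : h·n(x) > 0}} (ℓ(x,h) (h·e₁))² (h·n(x)) dσ(h) < ∞, where σ denotes the (d−1)-dimensional Hausdorff (surface) measure on S^{d−1}. -/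
/-!
Write `P y = y - (y·e₁) e₁` and `c = h·n(x) = -⟪P h, P x⟫ / M`. Along the ray `x + t h` the
quadratic `‖P (x + t h)‖² - M²` vanishes at `t = 0` and at `t = 2 M c / ‖P h‖²`, so the exit
length is at most the latter; Cauchy–Schwarz gives `c ≤ ‖P h‖`, hence the integrand is at most
`4 M² / ‖P h‖`. The unit vectors with `‖P h‖ ≤ r` form two caps around `±e₁`, each the image of the
`r`-ball of `ℝ^(d-1)` under a Lipschitz graph map, so their `(d-1)`-dimensional Hausdorff measure
is `O(r^(d-1))` (and the whole sphere, covered by `d` such caps, has finite measure). As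
`d - 1 > 1`, the layer-cake formula makes `1 / ‖P h‖` integrable on the sphere.
-/

open MeasureTheory Metric Set
open scoped RealInnerProductSpace NNReal ENNReal

local notation "ℝ^" n:max => EuclideanSpace ℝ (Fin n)

lemma abs_sqrt_one_sub_sq_sub_le {ρ a b : ℝ} (hρ : ρ < 1) (ha : |a| ≤ ρ) (hb : |b| ≤ ρ) :
    |√(1 - a ^ 2) - √(1 - b ^ 2)| * √(1 - ρ ^ 2) ≤ ρ * |a - b| := by
  have ha2 : a ^ 2 ≤ ρ ^ 2 := sq_le_sq' (abs_le.1 ha).1 (abs_le.1 ha).2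
  have hb2 : b ^ 2 ≤ ρ ^ 2 := sq_le_sq' (abs_le.1 hb).1 (abs_le.1 hb).2
  have hρ2 : ρ ^ 2 < 1 := by nlinarith [abs_nonneg a]
  have hκa : √(1 - ρ ^ 2) ≤ √(1 - a ^ 2) := Real.sqrt_le_sqrt (by linarith)
  have hκb : √(1 - ρ ^ 2) ≤ √(1 - b ^ 2) := Real.sqrt_le_sqrt (by linarith)
  have hprod : |√(1 - a ^ 2) - √(1 - b ^ 2)| * (√(1 - a ^ 2) + √(1 - b ^ 2))
      = |b - a| * |a + b| := by
    have hdiff : (√(1 - a ^ 2) - √(1 - b ^ 2)) * (√(1 - a ^ 2) + √(1 - b ^ 2))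
        = (b - a) * (a + b) := by
      rw [mul_comm, ← sq_sub_sq, Real.sq_sqrt (by linarith), Real.sq_sqrt (by linarith)]
      ring
    rw [← abs_of_nonneg (add_nonneg (Real.sqrt_nonneg _) (Real.sqrt_nonneg _)), ← abs_mul,
      ← abs_mul, hdiff]
  have hab : |a + b| ≤ 2 * ρ := (abs_add_le a b).trans (by linarith)
  rw [abs_sub_comm b a] at hprod
  nlinarith [abs_nonneg (√(1 - a ^ 2) - √(1 - b ^ 2)), abs_nonneg (a - b)]

theorem lintegral_ofReal_inv_lt_top_of_measure_le_rpow {α : Type*} [MeasurableSpace α]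
    {μ : Measure α} [IsFiniteMeasure μ] {g : α → ℝ} (hg₀ : ∀ x, 0 ≤ g x) (hg : AEMeasurable g μ)
    {p r₀ : ℝ} {D : ℝ≥0∞} (hp : 1 < p) (hr₀ : 0 < r₀) (hD : D ≠ ⊤)
    (hsmall : ∀ r, 0 < r → r ≤ r₀ → μ {x | g x ≤ r} ≤ D * ENNReal.ofReal (r ^ p)) :
    ∫⁻ x, ENNReal.ofReal (g x)⁻¹ ∂μ < ⊤ := by
  -- layer cake: `μ {t < g⁻¹}` is at most `μ univ` for small `t` and `D t⁻ᵖ` for large `t`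
  have hlevel : ∀ t ∈ Ioi r₀⁻¹, μ {x | t < (g x)⁻¹} ≤ D * ENNReal.ofReal (t ^ (-p)) := by
    intro t ht
    have ht0 : 0 < t := (inv_pos.2 hr₀).trans ht
    refine (measure_mono fun x hx => ?_).trans (hsmall t⁻¹ (inv_pos.2 ht0) ?_) |>.trans_eq ?_
    · have hgx : 0 < g x := inv_pos.1 (ht0.trans hx)
      exact (le_inv_comm₀ ht0 hgx).1 hx.le
    · exact inv_le_of_inv_le₀ hr₀ ht.le
    · rw [Real.inv_rpow ht0.le, Real.rpow_neg ht0.le]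
  have htail : ∫⁻ t in Ioi r₀⁻¹, ENNReal.ofReal (t ^ (-p)) < ⊤ :=
    (integrableOn_Ioi_rpow_of_lt (by linarith) (inv_pos.2 hr₀)).lintegral_lt_top
  rw [lintegral_eq_lintegral_meas_lt μ (f := fun x => (g x)⁻¹)
      (ae_of_all _ fun x => inv_nonneg.2 (hg₀ x)) hg.inv,
    ← Ioc_union_Ioi_eq_Ioi (inv_pos.2 hr₀).le]
  calc ∫⁻ t in Ioc 0 r₀⁻¹ ∪ Ioi r₀⁻¹, μ {x | t < (g x)⁻¹}
      ≤ (∫⁻ _ in Ioc 0 r₀⁻¹, μ univ) + ∫⁻ t in Ioi r₀⁻¹, D * ENNReal.ofReal (t ^ (-p)) :=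
        (lintegral_union_le _ _ _).trans (add_le_add
          (lintegral_mono fun _ => measure_mono (subset_univ _))
          (setLIntegral_mono' measurableSet_Ioi hlevel))
    _ < ⊤ := by
        rw [setLIntegral_const, lintegral_const_mul' _ _ hD, Real.volume_Ioc]
        exact ENNReal.add_lt_top.2 ⟨ENNReal.mul_lt_top (measure_lt_top μ _) ENNReal.ofReal_lt_top,
          ENNReal.mul_lt_top hD.lt_top htail⟩

section Cylinder

variable {E : Type*} [NormedAddCommGroup E] [InnerProductSpace ℝ E]

noncomputable def exitLength (C : Set E) (x v : E) : ℝ := sInf {t : ℝ | 0 < t ∧ x + t • v ∉ C}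

lemma exitLength_nonneg (C : Set E) (x v : E) : 0 ≤ exitLength C x v :=
  Real.sInf_nonneg fun _ ht => ht.1.le

theorem exitLength_le (P : E →ₗ[ℝ] E) {M : ℝ} {x v : E} (hx : ‖P x‖ = M)
    (hv : ⟪P v, P x⟫ < 0) :
    exitLength {y | ‖P y‖ < M} x v ≤ -2 * ⟪P v, P x⟫ / ‖P v‖ ^ 2 := by
  have hPv : 0 < ‖P v‖ := norm_pos_iff.2 fun h => by simp [h] at hv
  refine csInf_le ⟨0, fun _ ht => ht.1.le⟩ ⟨div_pos (by linarith) (by positivity), ?_⟩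
  -- the second intersection of the line `x + t v` with the cylinder wall
  have hwall : ‖P x + (-2 * ⟪P v, P x⟫ / ‖P v‖ ^ 2) • P v‖ ^ 2 = M ^ 2 := by
    rw [norm_add_sq_real, norm_smul, real_inner_smul_right, real_inner_comm, hx, mul_pow,
      Real.norm_eq_abs, sq_abs]
    field_simp
    ring
  simp only [mem_ofPred_eq, map_add, map_smul, not_lt]
  exact ((sq_eq_sq₀ (norm_nonneg _) (hx ▸ norm_nonneg _)).1 hwall).ge

theorem sq_exitLength_mul_inner_le (P : E →ₗ[ℝ] E) {M : ℝ} {x v : E} (hx : ‖P x‖ = M)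
    (hvx : ⟪v, P x⟫ = ⟪P v, P x⟫) (hv : 0 < ⟪v, -(M⁻¹ • P x)⟫) :
    exitLength {y | ‖P y‖ < M} x v ^ 2 * ⟪v, -(M⁻¹ • P x)⟫ ≤ 4 * M ^ 2 / ‖P v‖ := by
  set c := ⟪v, -(M⁻¹ • P x)⟫
  set ℓ := exitLength {y | ‖P y‖ < M} x v
  have hM : 0 < M := by
    refine (hx ▸ norm_nonneg _ : 0 ≤ M).lt_of_ne fun h => ?_
    simp [c, ← h] at hv
  have hcP : ⟪P v, P x⟫ = -(M * c) := by
    simp only [c, inner_neg_right, real_inner_smul_right, hvx]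
    field_simp
  have hcp : c ≤ ‖P v‖ := by
    have := neg_le_of_abs_le (abs_real_inner_le_norm (P v) (P x))
    rw [hcP, hx, neg_le_neg_iff, mul_comm] at this
    exact le_of_mul_le_mul_right this hM
  have hp : 0 < ‖P v‖ := hv.trans_le hcp
  have hℓ : ℓ * ‖P v‖ ^ 2 ≤ 2 * M * c := by
    have := exitLength_le P hx (hcP ▸ neg_neg_of_pos (mul_pos hM hv))
    rwa [hcP, le_div_iff₀ (by positivity), neg_mul_neg, ← mul_assoc] at this
  rw [le_div_iff₀ hp]
  refine le_of_mul_le_mul_right ?_ (pow_pos hp 3)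
  have h1 := pow_le_pow_left₀ (mul_nonneg (exitLength_nonneg _ _ _) (sq_nonneg _)) hℓ 2
  have h2 := pow_le_pow_left₀ hv.le hcp 3
  calc ℓ ^ 2 * c * ‖P v‖ * ‖P v‖ ^ 3 = (ℓ * ‖P v‖ ^ 2) ^ 2 * c := by ring
    _ ≤ (2 * M * c) ^ 2 * c := by gcongr
    _ = 4 * M ^ 2 * c ^ 3 := by ring
    _ ≤ 4 * M ^ 2 * ‖P v‖ ^ 3 := by gcongr

end Cylinder

namespace EuclideanSpace

variable {n : ℕ}

def tail (y : ℝ^(n + 1)) : ℝ^n := WithLp.toLp 2 (Fin.tail y.ofLp)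

noncomputable def hemisphereGraph (v : ℝ^n) : ℝ^(n + 1) :=
  WithLp.toLp 2 (Fin.cons (√(1 - ‖v‖ ^ 2)) v.ofLp)

@[simp] lemma tail_apply (y : ℝ^(n + 1)) (i : Fin n) : tail y i = y i.succ := rfl

lemma tail_sub (y z : ℝ^(n + 1)) : tail (y - z) = tail y - tail z := rfl

lemma tail_neg (y : ℝ^(n + 1)) : tail (-y) = -tail y := rfl

lemma hemisphereGraph_zero (v : ℝ^n) : hemisphereGraph v 0 = √(1 - ‖v‖ ^ 2) := rfl

lemma tail_hemisphereGraph (v : ℝ^n) : tail (hemisphereGraph v) = v := rfl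

lemma norm_sq_eq_sq_add_norm_tail_sq (y : ℝ^(n + 1)) : ‖y‖ ^ 2 = y 0 ^ 2 + ‖tail y‖ ^ 2 := by
  simp [EuclideanSpace.real_norm_sq_eq, Fin.sum_univ_succ]

lemma dist_sq_eq_sq_add_dist_tail_sq (y z : ℝ^(n + 1)) :
    dist y z ^ 2 = (y 0 - z 0) ^ 2 + dist (tail y) (tail z) ^ 2 := by
  simp only [dist_eq_norm, norm_sq_eq_sq_add_norm_tail_sq, tail_sub]
  rfl

lemma lipschitzWith_tail : LipschitzWith 1 (tail (n := n)) :=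
  LipschitzWith.of_dist_le_mul fun y z => by
    rw [NNReal.coe_one, one_mul]
    refine (pow_le_pow_iff_left₀ dist_nonneg dist_nonneg two_ne_zero).1 ?_
    linarith [dist_sq_eq_sq_add_dist_tail_sq y z, sq_nonneg (y 0 - z 0)]

lemma eq_hemisphereGraph_tail {y : ℝ^(n + 1)} (hy : ‖y‖ = 1) (h0 : 0 ≤ y 0) :
    hemisphereGraph (tail y) = y := by
  have hs : 1 - ‖tail y‖ ^ 2 = y 0 ^ 2 := by
    have h := norm_sq_eq_sq_add_norm_tail_sq y
    rw [hy, one_pow] at h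
    linarith
  ext i
  refine Fin.cases ?_ (fun j => ?_) i
  · rw [hemisphereGraph_zero, hs, Real.sqrt_sq h0]
  · rfl

lemma lipschitzOnWith_hemisphereGraph {ρ : ℝ} (hρ : ρ < 1) :
    LipschitzOnWith (Real.toNNReal (√(1 - ρ ^ 2))⁻¹) (hemisphereGraph (n := n))
      (closedBall 0 ρ) := by
  refine LipschitzOnWith.of_dist_le_mul fun v hv w hw => ?_
  rw [mem_closedBall_zero_iff] at hv hw
  have hρ2 : 0 < 1 - ρ ^ 2 := by nlinarith [norm_nonneg v]
  have hκ : 0 < √(1 - ρ ^ 2) := Real.sqrt_pos.2 hρ2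
  have hnorm : |‖v‖ - ‖w‖| ≤ dist v w := abs_norm_sub_norm_le v w
  have hsqrt := abs_sqrt_one_sub_sq_sub_le hρ (a := ‖v‖) (b := ‖w‖)
    (by rwa [abs_norm]) (by rwa [abs_norm])
  have hsq : dist (hemisphereGraph v) (hemisphereGraph w) ^ 2 * (1 - ρ ^ 2) ≤ dist v w ^ 2 := by
    have hρ0 : 0 ≤ ρ := (norm_nonneg v).trans hv
    have h := pow_le_pow_left₀ (by positivity) (hsqrt.trans (mul_le_mul_of_nonneg_left hnorm hρ0)) 2
    rw [mul_pow, mul_pow, sq_abs, Real.sq_sqrt hρ2.le] at h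
    rw [dist_sq_eq_sq_add_dist_tail_sq, hemisphereGraph_zero, hemisphereGraph_zero,
      tail_hemisphereGraph, tail_hemisphereGraph]
    linear_combination h
  rw [Real.coe_toNNReal _ (inv_nonneg.2 hκ.le), inv_mul_eq_div, le_div_iff₀ hκ]
  refine (pow_le_pow_iff_left₀ (by positivity) dist_nonneg two_ne_zero).1 ?_
  rwa [mul_pow, Real.sq_sqrt hρ2.le]

lemma sphere_tail_le_subset_hemisphereGraph (r : ℝ) :
    {y ∈ sphere (0 : ℝ^(n + 1)) 1 | ‖tail y‖ ≤ r} ⊆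
      hemisphereGraph '' closedBall 0 r ∪ Neg.neg '' (hemisphereGraph '' closedBall 0 r) := by
  rintro y ⟨hy, hr⟩
  rw [mem_sphere_zero_iff_norm] at hy
  rcases le_total 0 (y 0) with h0 | h0
  · exact Or.inl ⟨tail y, by simpa using hr, eq_hemisphereGraph_tail hy h0⟩
  · refine Or.inr ⟨-y, ⟨tail (-y), by simpa [tail_neg] using hr, ?_⟩, neg_neg y⟩
    exact eq_hemisphereGraph_tail (by rwa [norm_neg]) (by simpa using h0)

theorem exists_hausdorffMeasure_sphere_tail_le (n : ℕ) {ρ : ℝ} (hρ : ρ < 1) :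
    ∃ D : ℝ≥0∞, D ≠ ⊤ ∧ ∀ r, 0 ≤ r → r ≤ ρ →
      μH[n] {y ∈ sphere (0 : ℝ^(n + 1)) 1 | ‖tail y‖ ≤ r} ≤ D * ENNReal.ofReal (r ^ n) := by
  set K := Real.toNNReal (√(1 - ρ ^ 2))⁻¹
  set B := (μH[n] : Measure (ℝ^n)) (closedBall 0 1)
  refine ⟨2 * (K : ℝ≥0∞) ^ (n : ℝ) * B, ?_, fun r hr hrρ => ?_⟩
  · exact ENNReal.mul_ne_top (ENNReal.mul_ne_top ENNReal.ofNat_ne_top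
      (ENNReal.rpow_ne_top_of_nonneg (Nat.cast_nonneg n) ENNReal.coe_ne_top))
      measure_closedBall_lt_top.ne
  set G : Set (ℝ^(n + 1)) := hemisphereGraph '' closedBall 0 r
  have hG : μH[n] G ≤ (K : ℝ≥0∞) ^ (n : ℝ) * (ENNReal.ofReal (r ^ n) * B) := by
    refine ((lipschitzOnWith_hemisphereGraph hρ).mono
      (closedBall_subset_closedBall hrρ)).hausdorffMeasure_image_le (Nat.cast_nonneg n) |>.trans ?_
    rw [Measure.addHaar_closedBall' _ _ hr, finrank_euclideanSpace_fin]
  calc μH[n] {y ∈ sphere (0 : ℝ^(n + 1)) 1 | ‖tail y‖ ≤ r}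
      ≤ μH[n] G + μH[n] (Neg.neg '' G) :=
        (measure_mono (sphere_tail_le_subset_hemisphereGraph r)).trans (measure_union_le _ _)
    _ = 2 * μH[n] G := by
        rw [isometry_neg.hausdorffMeasure_image (Or.inl (Nat.cast_nonneg n)), two_mul]
    _ ≤ 2 * ((K : ℝ≥0∞) ^ (n : ℝ) * (ENNReal.ofReal (r ^ n) * B)) := by gcongr
    _ = 2 * (K : ℝ≥0∞) ^ (n : ℝ) * B * ENNReal.ofReal (r ^ n) := by ring

theorem hausdorffMeasure_sphere_ne_top (n : ℕ) : μH[n] (sphere (0 : ℝ^(n + 1)) 1) ≠ ⊤ := by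
  -- every unit vector has a coordinate `i` with `y i ^ 2 ≥ 1 / (n + 1)`; swapping it to position
  -- `0` puts the vector in the cap `‖tail y‖ ≤ ρ` with `ρ ^ 2 = n / (n + 1)`
  set ρ := √(n / (n + 1) : ℝ)
  have hρ2 : ρ ^ 2 = 1 - 1 / (n + 1) := by
    rw [Real.sq_sqrt (by positivity)]; field_simp; ring
  have hρ : ρ < 1 := by
    rw [← Real.sqrt_one]
    exact Real.sqrt_lt_sqrt (by positivity) ((div_lt_one (by positivity)).2 (by linarith))
  obtain ⟨D, hD, hcap⟩ := exists_hausdorffMeasure_sphere_tail_le n hρ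
  let σ (i : Fin (n + 1)) := LinearIsometryEquiv.piLpCongrLeft 2 ℝ ℝ (Equiv.swap 0 i)
  have hσ (i : Fin (n + 1)) (y : ℝ^(n + 1)) : σ i y 0 = y i := by
    simp [σ, LinearIsometryEquiv.piLpCongrLeft_apply, Equiv.piCongrLeft'_apply]
  have hcover : sphere (0 : ℝ^(n + 1)) 1 ⊆
      ⋃ i, σ i ⁻¹' {y ∈ sphere (0 : ℝ^(n + 1)) 1 | ‖tail y‖ ≤ ρ} := by
    intro y hy
    rw [mem_sphere_zero_iff_norm] at hy
    have hsum : ∑ _i : Fin (n + 1), (1 / (n + 1) : ℝ) ≤ ∑ i, y i ^ 2 := by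
      rw [← EuclideanSpace.real_norm_sq_eq, hy]
      simp [mul_inv_cancel₀ (by positivity : (n + 1 : ℝ) ≠ 0)]
    obtain ⟨i, -, hi⟩ := Finset.exists_le_of_sum_le Finset.univ_nonempty hsum
    refine mem_iUnion.2 ⟨i, ?_, ?_⟩
    · simpa [mem_sphere_zero_iff_norm] using hy
    · have h := norm_sq_eq_sq_add_norm_tail_sq (σ i y)
      rw [LinearIsometryEquiv.norm_map, hy, hσ] at h
      exact (pow_le_pow_iff_left₀ (norm_nonneg _) (Real.sqrt_nonneg _) two_ne_zero).1
        (by linarith)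
  refine ne_top_of_le_ne_top ?_ ((measure_mono hcover).trans (measure_iUnion_fintype_le _ _))
  have hpre (i : Fin (n + 1)) (s : Set (ℝ^(n + 1))) : μH[n] (σ i ⁻¹' s) = μH[n] s :=
    (σ i).toIsometryEquiv.hausdorffMeasure_preimage _ s
  simp only [hpre, Finset.sum_const, Finset.card_univ, Fintype.card_fin, nsmul_eq_mul]
  exact ENNReal.mul_ne_top (ENNReal.natCast_ne_top _)
    (ne_top_of_le_ne_top (ENNReal.mul_ne_top hD ENNReal.ofReal_ne_top)
      (hcap ρ (Real.sqrt_nonneg _) le_rfl))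

instance : IsFiniteMeasure (μH[n] : Measure (sphere (0 : ℝ^(n + 1)) 1)) where
  measure_univ_lt_top := by
    rw [← isometry_subtype_coe.hausdorffMeasure_image (Or.inl (Nat.cast_nonneg n)), image_univ,
      Subtype.range_coe]
    exact (hausdorffMeasure_sphere_ne_top n).lt_top

theorem lintegral_inv_norm_tail_lt_top (hn : 2 ≤ n) :
    ∫⁻ y : sphere (0 : ℝ^(n + 1)) 1, ENNReal.ofReal ‖tail (y : ℝ^(n + 1))‖⁻¹ ∂μH[n] < ⊤ := by
  obtain ⟨D, hD, hcap⟩ := exists_hausdorffMeasure_sphere_tail_le n (ρ := 1 / 2) (by norm_num)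
  refine lintegral_ofReal_inv_lt_top_of_measure_le_rpow (fun _ => norm_nonneg _)
    (lipschitzWith_tail.continuous.comp continuous_subtype_val).norm.aemeasurable (p := n)
    (by exact_mod_cast hn) one_half_pos hD fun r hr hr₀ => ?_
  rw [← isometry_subtype_coe.hausdorffMeasure_image (Or.inl (Nat.cast_nonneg n)),
    Real.rpow_natCast]
  refine (measure_mono ?_).trans (hcap r hr.le hr₀)
  rintro _ ⟨y, hy, rfl⟩
  exact ⟨y.2, hy⟩

noncomputable def radialProj (n : ℕ) : ℝ^(n + 1) →ₗ[ℝ] ℝ^(n + 1) :=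
  LinearMap.id - (EuclideanSpace.projₗ 0).smulRight (EuclideanSpace.single 0 1)

lemma radialProj_apply (y : ℝ^(n + 1)) : radialProj n y = y - y 0 • EuclideanSpace.single 0 1 :=
  rfl

@[simp] lemma radialProj_apply_zero (y : ℝ^(n + 1)) : radialProj n y 0 = 0 := by
  simp [radialProj_apply]

@[simp] lemma tail_radialProj (y : ℝ^(n + 1)) : tail (radialProj n y) = tail y := by
  ext i
  simp [radialProj_apply, Fin.succ_ne_zero]

lemma norm_radialProj (y : ℝ^(n + 1)) : ‖radialProj n y‖ = ‖tail y‖ := by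
  rw [← sq_eq_sq₀ (norm_nonneg _) (norm_nonneg _), norm_sq_eq_sq_add_norm_tail_sq]
  simp

lemma inner_radialProj_right (y z : ℝ^(n + 1)) :
    ⟪y, radialProj n z⟫ = ⟪radialProj n y, radialProj n z⟫ := by
  rw [radialProj_apply y, inner_sub_left, real_inner_smul_left,
    EuclideanSpace.inner_single_left]
  simp

end EuclideanSpace

open EuclideanSpace in
theorem cylinder_cosine_second_moment_finite_general
    (m : ℕ) (M : ℝ)
    (C : Set (EuclideanSpace ℝ (Fin (m + 3))))
    (hC : C = {y : EuclideanSpace ℝ (Fin (m + 3)) |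
      ‖y - y 0 • EuclideanSpace.single (0 : Fin (m + 3)) (1 : ℝ)‖ < M})
    (nvec : EuclideanSpace ℝ (Fin (m + 3)) → EuclideanSpace ℝ (Fin (m + 3)))
    (hn : ∀ x, nvec x =
      -(M⁻¹ • (x - x 0 • EuclideanSpace.single (0 : Fin (m + 3)) (1 : ℝ))))
    (ℓ : EuclideanSpace ℝ (Fin (m + 3)) →
      Metric.sphere (0 : EuclideanSpace ℝ (Fin (m + 3))) 1 → ℝ)
    (hℓ : ∀ x h, ℓ x h =
      sInf {t : ℝ | 0 < t ∧ x + t • (h : EuclideanSpace ℝ (Fin (m + 3))) ∉ C})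
    (x : EuclideanSpace ℝ (Fin (m + 3))) (hx : x ∈ frontier C) :
    (∫⁻ h in {h : Metric.sphere (0 : EuclideanSpace ℝ (Fin (m + 3))) 1 |
        0 < ⟪(h : EuclideanSpace ℝ (Fin (m + 3))), nvec x⟫},
      ENNReal.ofReal ((ℓ x h * (h : EuclideanSpace ℝ (Fin (m + 3))) 0) ^ 2 *
        ⟪(h : EuclideanSpace ℝ (Fin (m + 3))), nvec x⟫)
      ∂(μH[(m + 2 : ℝ)])) < ⊤ := by
  subst hC
  set P := radialProj (m + 2)
  have hxM : ‖P x‖ = M := frontier_lt_subset_eq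
    (continuous_norm.comp P.continuous_of_finiteDimensional) continuous_const hx
  have hbound (h : sphere (0 : ℝ^(m + 3)) 1) :
      ENNReal.ofReal ((ℓ x h * (h : ℝ^(m + 3)) 0) ^ 2 * ⟪(h : ℝ^(m + 3)), nvec x⟫)
        ≤ ENNReal.ofReal (4 * M ^ 2) * ENNReal.ofReal ‖tail (h : ℝ^(m + 3))‖⁻¹ := by
    rcases le_or_gt ⟪(h : ℝ^(m + 3)), nvec x⟫ 0 with hneg | hpos
    · rw [ENNReal.ofReal_of_nonpos (mul_nonpos_of_nonneg_of_nonpos (sq_nonneg _) hneg)]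
      exact zero_le
    rw [← ENNReal.ofReal_mul (by positivity), ← div_eq_mul_inv, ← norm_radialProj]
    refine ENNReal.ofReal_le_ofReal ?_
    have h0 : (h : ℝ^(m + 3)) 0 ^ 2 ≤ 1 := by
      rw [sq_le_one_iff_abs_le_one, ← Real.norm_eq_abs]
      exact (PiLp.norm_apply_le _ 0).trans_eq (norm_eq_of_mem_sphere h)
    rw [hn] at hpos ⊢
    rw [hℓ]
    calc _ ≤ exitLength {y | ‖P y‖ < M} x h ^ 2 * ⟪(h : ℝ^(m + 3)), -(M⁻¹ • P x)⟫ := by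
          rw [mul_pow]
          exact mul_le_mul_of_nonneg_right (mul_le_of_le_one_right (sq_nonneg _) h0) hpos.le
      _ ≤ 4 * M ^ 2 / ‖P h‖ :=
          sq_exitLength_mul_inner_le P hxM (inner_radialProj_right _ _) hpos
  have hfin := lintegral_inv_norm_tail_lt_top (n := m + 2) (by omega)
  push_cast at hfin
  refine (lintegral_mono hbound).trans_lt ((setLIntegral_le_lintegral _ _).trans_lt ?_)
  rw [lintegral_const_mul' _ _ ENNReal.ofReal_ne_top]
  exact ENNReal.mul_lt_top ENNReal.ofReal_lt_top hfin

/-- **Core of Proposition 2.3** (`d ≥ 3`, written as `d = m + 3`): in the open infinite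
circular cylinder of radius `M` about the first coordinate axis, from any boundary
point the second moment of the horizontal displacement of the cosine-law chord
is finite. -/
theorem cylinder_cosine_second_moment_finite
    (m : ℕ) (M : ℝ) (hM : 0 < M)
    (C : Set (EuclideanSpace ℝ (Fin (m + 3))))
    (hC : C = {y : EuclideanSpace ℝ (Fin (m + 3)) |
      ‖y - y 0 • EuclideanSpace.single (0 : Fin (m + 3)) (1 : ℝ)‖ < M})
    (nvec : EuclideanSpace ℝ (Fin (m + 3)) → EuclideanSpace ℝ (Fin (m + 3)))
    (hn : ∀ x, nvec x =
      -(M⁻¹ • (x - x 0 • EuclideanSpace.single (0 : Fin (m + 3)) (1 : ℝ))))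
    (ℓ : EuclideanSpace ℝ (Fin (m + 3)) →
      Metric.sphere (0 : EuclideanSpace ℝ (Fin (m + 3))) 1 → ℝ)
    (hℓ : ∀ x h, ℓ x h =
      sInf {t : ℝ | 0 < t ∧ x + t • (h : EuclideanSpace ℝ (Fin (m + 3))) ∉ C})
    (x : EuclideanSpace ℝ (Fin (m + 3))) (hx : x ∈ frontier C) :
    (∫⁻ h in {h : Metric.sphere (0 : EuclideanSpace ℝ (Fin (m + 3))) 1 |
        0 < ⟪(h : EuclideanSpace ℝ (Fin (m + 3))), nvec x⟫},
      ENNReal.ofReal ((ℓ x h * (h : EuclideanSpace ℝ (Fin (m + 3))) 0) ^ 2 *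
        ⟪(h : EuclideanSpace ℝ (Fin (m + 3))), nvec x⟫)
      ∂(μH[(m + 2 : ℝ)])) < ⊤ :=
  cylinder_cosine_second_moment_finite_general m M C hC nvec hn ℓ hℓ x hx
end

section
/- (Core of Proposition 2.4: infinite projected second moment in a two-dimensional strip.) Let r > 0 and consider in ℝ² the infinite horizontal strip {y : 0 < y·e₂ < r}, a boundary point x on the lower boundary (x·e₂ = 0) with inward unit normal e₂. For h ∈ S¹ with h·e₂ > 0, the chord from x in direction h exits the strip at distance ℓ(h) = r/(h·e₂), so its horizontal displacement is ℓ(h)(h·e₁) = r (h·e₁)/(h·e₂). Then the second moment of this horizontal displacement under the cosine law is infinite: ∫_{{h ∈ S¹ : h·e₂ > 0}} (r (h·e₁)/(h·e₂))² (h·e₂) dσ(h) = +∞, where σ denotes the 1-dimensional Hausdorff measure on the unit circle S¹. -/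
/-!
The integrand depends on `h` only through its height `t = h·e₂`, where it equals
`r² (1 - t²) / t`. The height map is 1-Lipschitz on the circle, so it pushes `μH[1]` forward to
a measure dominating Lebesgue measure on its range `[-1, 1]`; the integral is therefore at least
`∫₀^{1/2} (3 r² / 4) / t dt = ∞`.
-/

open MeasureTheory Set

theorem lintegral_ofReal_inv_Ioc_eq_top {a : ℝ} (ha : 0 < a) :
    ∫⁻ t in Ioc 0 a, ENNReal.ofReal t⁻¹ = ⊤ := by
  have h_not : ¬ IntegrableOn (fun t : ℝ => t⁻¹) (Ioc 0 a) := by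
    rw [← intervalIntegrable_iff_integrableOn_Ioc_of_le ha.le, intervalIntegrable_inv_iff]
    simp [ha.ne, ha.le]
  by_contra h_fin
  refine h_not ((lintegral_ofReal_ne_top_iff_integrable ?_ ?_).mp h_fin)
  · exact measurable_inv.aestronglyMeasurable
  · filter_upwards [ae_restrict_mem measurableSet_Ioc] with t ht
    exact inv_nonneg.mpr ht.1.le

theorem LipschitzWith.volume_restrict_range_le_map_hausdorffMeasure {X : Type*} [EMetricSpace X]
    [MeasurableSpace X] [BorelSpace X] {φ : X → ℝ} (hφ : LipschitzWith 1 φ) :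
    volume.restrict (range φ) ≤ (μH[1] : Measure X).map φ := by
  refine Measure.le_iff.mpr fun s hs => ?_
  rw [Measure.restrict_apply hs, Measure.map_apply hφ.continuous.measurable hs,
    ← image_preimage_eq_inter_range, ← hausdorffMeasure_real]
  simpa using hφ.hausdorffMeasure_image_le zero_le_one (φ ⁻¹' s)

local notation "S¹" => Metric.sphere (0 : EuclideanSpace ℝ (Fin 2)) 1

theorem lipschitzWith_subtype_euclideanSpace_apply {ι : Type*} [Fintype ι]
    (s : Set (EuclideanSpace ℝ ι)) (i : ι) :
    LipschitzWith 1 (fun h : s => (h : EuclideanSpace ℝ ι) i) :=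
  LipschitzWith.of_dist_le_mul fun x y => by
    simpa [Subtype.dist_eq] using PiLp.dist_apply_le (x : EuclideanSpace ℝ ι) y i

theorem sphere_apply_zero_sq_add_apply_one_sq (h : S¹) :
    (h : EuclideanSpace ℝ (Fin 2)) 0 ^ 2 + (h : EuclideanSpace ℝ (Fin 2)) 1 ^ 2 = 1 := by
  have := EuclideanSpace.real_norm_sq_eq (h : EuclideanSpace ℝ (Fin 2))
  simpa [Fin.sum_univ_two, norm_eq_of_mem_sphere h] using this.symm

theorem Icc_subset_range_sphere_apply_one :
    Icc (-1) 1 ⊆ range (fun h : S¹ => (h : EuclideanSpace ℝ (Fin 2)) 1) := by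
  intro t ht
  have ht2 : t ^ 2 ≤ 1 := by nlinarith [ht.1, ht.2]
  refine ⟨⟨!₂[√(1 - t ^ 2), t], ?_⟩, rfl⟩
  simp [EuclideanSpace.norm_eq, Fin.sum_univ_two, Real.sq_sqrt (sub_nonneg.mpr ht2)]

theorem mul_div_sq_mul_eq_of_sq_add_sq_eq_one {r x y : ℝ} (h : x ^ 2 + y ^ 2 = 1) :
    (r * x / y) ^ 2 * y = r ^ 2 * (1 - y ^ 2) / y := by
  rw [← eq_sub_of_add_eq h]
  rcases eq_or_ne y 0 with rfl | hy
  · simp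
  · field_simp

/-- **Core of Proposition 2.4:** in the two-dimensional strip of width `r`, the second
moment under the cosine law of the horizontal displacement `r (h·e₁)/(h·e₂)` of the
chord leaving the lower boundary is infinite. -/
theorem strip_cosine_second_moment_infinite
    (r : ℝ) (hr : 0 < r) :
    (∫⁻ h in {h : Metric.sphere (0 : EuclideanSpace ℝ (Fin 2)) 1 |
        0 < (h : EuclideanSpace ℝ (Fin 2)) 1},
      ENNReal.ofReal ((r * (h : EuclideanSpace ℝ (Fin 2)) 0 /
          (h : EuclideanSpace ℝ (Fin 2)) 1) ^ 2 *
        (h : EuclideanSpace ℝ (Fin 2)) 1)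
      ∂(μH[(1 : ℝ)])) = ⊤ := by
  set height : S¹ → ℝ := fun h => (h : EuclideanSpace ℝ (Fin 2)) 1
  have h_height : LipschitzWith 1 height := lipschitzWith_subtype_euclideanSpace_apply _ 1
  set g : ℝ → ENNReal := fun t => ENNReal.ofReal (r ^ 2 * (1 - t ^ 2) / t)
  have hg : Measurable g := by fun_prop
  have h_integrand (h : S¹) : ENNReal.ofReal ((r * (h : EuclideanSpace ℝ (Fin 2)) 0 /
      height h) ^ 2 * height h) = g (height h) := by
    rw [mul_div_sq_mul_eq_of_sq_add_sq_eq_one (sphere_apply_zero_sq_add_apply_one_sq h)]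
  refine top_le_iff.mp ?_
  calc ⊤ = ∫⁻ t in Ioc 0 (1 / 2), ENNReal.ofReal (r ^ 2 * (3 / 4)) * ENNReal.ofReal t⁻¹ := by
        rw [lintegral_const_mul _ measurable_inv.ennreal_ofReal,
          lintegral_ofReal_inv_Ioc_eq_top (by norm_num), ENNReal.mul_top (by positivity)]
    _ ≤ ∫⁻ t in Ioc 0 (1 / 2), g t := by
        refine setLIntegral_mono hg fun t ⟨ht₀, ht₁⟩ => ?_
        rw [← ENNReal.ofReal_mul (by positivity)]
        refine ENNReal.ofReal_le_ofReal ?_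
        rw [div_eq_mul_inv _ t]
        gcongr
        nlinarith
    _ ≤ ∫⁻ t in Ioi 0, g t ∂volume.restrict (range height) := by
        rw [Measure.restrict_restrict measurableSet_Ioi]
        refine lintegral_mono_set fun t ⟨ht₀, ht₁⟩ => ⟨ht₀, ?_⟩
        exact Icc_subset_range_sphere_apply_one ⟨by linarith, by linarith⟩
    _ ≤ ∫⁻ t in Ioi 0, g t ∂(μH[1] : Measure S¹).map height :=
        lintegral_mono' (Measure.restrict_mono le_rfl
          h_height.volume_restrict_range_le_map_hausdorffMeasure) le_rfl
    _ = _ := by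
        rw [setLIntegral_map measurableSet_Ioi hg h_height.continuous.measurable]
        exact lintegral_congr fun h => (h_integrand h).symm
end

section
/- (Direction-measure bound (5.1), basis of Proposition 2.3 for d ≥ 4.) Let d ≥ 2 and M > 0, and let T = {y ∈ ℝ^d : ‖y − (y·e₁)e₁‖ ≤ M} be the closed infinite cylinder of radius M about the first coordinate axis. Then there exists a constant C > 0, depending only on M and d, such that for every x ∈ T and every h ≥ 1, the (d−1)-dimensional Hausdorff measure of the set of directions {s ∈ S^{d−1} : x + h s ∈ T} is at most C h^{−(d−1)}. -/
/-!
If `x` and `x + h • s` both lie in the cylinder, the component of `s` orthogonal to the axis `u`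
has norm at most `2M/h`, so the directions in question lie in the tube
`{y ∈ S^{d-1} | ‖y - ⟪y, u⟫ • u‖ ≤ ρ}` with `ρ = 2M/h`. For `ρ ≤ 1/2` the tube lies in two polar
caps, and the cap around `u` is the image of the ball of radius `2ρ` in the hyperplane `u^⊥`
under the central projection `v ↦ (u + v) / ‖u + v‖`. That map is `1`-Lipschitz because the
radial retraction onto the unit ball is, so the tube has `(d-1)`-dimensional Hausdorff measure
`O(ρ^(d-1))`. For `ρ > 1/2` it suffices that the whole sphere has finite measure, which holds
because finitely many such caps, around `±bᵢ` for an orthonormal basis `b`, cover it.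
-/

open MeasureTheory Metric Module
open scoped ENNReal RealInnerProductSpace

variable {E : Type*} [NormedAddCommGroup E] [InnerProductSpace ℝ E]

theorem norm_inv_norm_smul_sub_inv_norm_smul_le {x y : E} (hx : 1 ≤ ‖x‖) (hy : 1 ≤ ‖y‖) :
    ‖‖x‖⁻¹ • x - ‖y‖⁻¹ • y‖ ≤ ‖x - y‖ := by
  have hx0 : 0 < ‖x‖ := by linarith
  have hy0 : 0 < ‖y‖ := by linarith
  set c := ⟪x, y⟫ / (‖x‖ * ‖y‖) with hc_def
  have hc : c ≤ 1 := div_le_one_of_le₀ (real_inner_le_norm x y) (by positivity)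
  have hxy : ⟪x, y⟫ = c * (‖x‖ * ‖y‖) := by rw [hc_def]; field_simp
  have hsq : ‖‖x‖⁻¹ • x - ‖y‖⁻¹ • y‖ ^ 2 = 2 - 2 * c := by
    rw [norm_sub_sq_real, norm_smul, norm_smul, real_inner_smul_left, real_inner_smul_right,
      hxy, norm_inv, norm_norm, norm_inv, norm_norm]
    field_simp
    ring
  refine (pow_le_pow_iff_left₀ (norm_nonneg _) (norm_nonneg _) two_ne_zero).1 ?_
  rw [hsq, norm_sub_sq_real, hxy]
  nlinarith [mul_le_mul_of_nonneg_left (show (1:ℝ) ≤ ‖x‖ * ‖y‖ by nlinarith) (sub_nonneg.2 hc),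
    sq_nonneg (‖x‖ - ‖y‖)]

theorem norm_sub_inner_smul_sq {u : E} (hu : ‖u‖ = 1) (y : E) :
    ‖y - ⟪y, u⟫ • u‖ ^ 2 = ‖y‖ ^ 2 - ⟪y, u⟫ ^ 2 := by
  rw [norm_sub_sq_real, real_inner_smul_right, norm_smul, hu, mul_one, Real.norm_eq_abs, sq_abs]
  ring

theorem norm_sub_inner_smul_le_of_add_smul {u x s : E} {M h : ℝ} (hh : 0 < h)
    (hx : ‖x - ⟪x, u⟫ • u‖ ≤ M) (hxs : ‖x + h • s - ⟪x + h • s, u⟫ • u‖ ≤ M) :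
    ‖s - ⟪s, u⟫ • u‖ ≤ 2 * M / h := by
  have hlin : x + h • s - ⟪x + h • s, u⟫ • u = (x - ⟪x, u⟫ • u) + h • (s - ⟪s, u⟫ • u) := by
    rw [inner_add_left, real_inner_smul_left]; module
  rw [le_div_iff₀ hh, mul_comm, ← Real.norm_of_nonneg hh.le, ← norm_smul]
  calc ‖h • (s - ⟪s, u⟫ • u)‖ = ‖(x + h • s - ⟪x + h • s, u⟫ • u) - (x - ⟪x, u⟫ • u)‖ := by
        rw [hlin, add_sub_cancel_left]
    _ ≤ M + M := norm_sub_le_of_le hxs hx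
    _ = 2 * M := by ring

noncomputable def inverseGnomonic (u : E) (v : (ℝ ∙ u)ᗮ) : E := ‖u + v‖⁻¹ • (u + v)

theorem one_le_norm_add_of_mem_orthogonal {u : E} (hu : ‖u‖ = 1) (v : (ℝ ∙ u)ᗮ) :
    1 ≤ ‖u + v‖ := by
  have horth : ⟪u, (v : E)⟫ = 0 := Submodule.mem_orthogonal_singleton_iff_inner_right.1 v.2
  have h := norm_add_sq_eq_norm_sq_add_norm_sq_real horth
  rw [hu] at h
  nlinarith [norm_nonneg (u + v), sq_nonneg ‖(v : E)‖]

theorem lipschitzWith_one_inverseGnomonic {u : E} (hu : ‖u‖ = 1) :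
    LipschitzWith 1 (inverseGnomonic u) := by
  refine LipschitzWith.of_dist_le_mul fun v w => ?_
  rw [NNReal.coe_one, one_mul, dist_eq_norm, dist_eq_norm, Submodule.coe_norm,
    Submodule.coe_sub, ← add_sub_add_left_eq_sub (v : E) w u]
  exact norm_inv_norm_smul_sub_inv_norm_smul_le (one_le_norm_add_of_mem_orthogonal hu v)
    (one_le_norm_add_of_mem_orthogonal hu w)

theorem mem_inverseGnomonic_image {u y : E} (hu : ‖u‖ = 1) (hy : ‖y‖ = 1) {τ ρ : ℝ}
    (hτ : 0 < τ) (hyu : τ ≤ ⟪y, u⟫) (hρ : ‖y - ⟪y, u⟫ • u‖ ≤ ρ) :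
    y ∈ inverseGnomonic u '' closedBall 0 (ρ / τ) := by
  set t := ⟪y, u⟫
  have ht : 0 < t := hτ.trans_le hyu
  have hv : t⁻¹ • (y - t • u) ∈ (ℝ ∙ u)ᗮ := by
    rw [Submodule.mem_orthogonal_singleton_iff_inner_right, real_inner_smul_right,
      inner_sub_right, real_inner_smul_right, real_inner_self_eq_norm_sq, hu, real_inner_comm]
    ring
  refine ⟨⟨_, hv⟩, ?_, ?_⟩
  · rw [mem_closedBall_zero_iff, Submodule.coe_norm, norm_smul, norm_inv,
      Real.norm_of_nonneg ht.le, inv_mul_eq_div]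
    exact div_le_div₀ ((norm_nonneg _).trans hρ) hρ hτ hyu
  · have hsum : u + t⁻¹ • (y - t • u) = t⁻¹ • y := by
      rw [smul_sub, smul_smul, inv_mul_cancel₀ ht.ne', one_smul]; abel
    rw [inverseGnomonic, hsum, norm_smul, hy, norm_inv, Real.norm_of_nonneg ht.le, mul_one,
      inv_inv, smul_smul, mul_inv_cancel₀ ht.ne', one_smul]

variable [MeasurableSpace E] [BorelSpace E]

theorem hausdorffMeasure_sphere_cap_le {u : E} (hu : ‖u‖ = 1) {τ ρ d : ℝ} (hτ : 0 < τ)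
    (hd : 0 ≤ d) :
    μH[d] {y ∈ sphere (0 : E) 1 | τ ≤ |⟪y, u⟫| ∧ ‖y - ⟪y, u⟫ • u‖ ≤ ρ}
      ≤ 2 * μH[d] (closedBall (0 : (ℝ ∙ u)ᗮ) (ρ / τ)) := by
  set S := inverseGnomonic u '' closedBall 0 (ρ / τ)
  have hcover : {y ∈ sphere (0 : E) 1 | τ ≤ |⟪y, u⟫| ∧ ‖y - ⟪y, u⟫ • u‖ ≤ ρ} ⊆ S ∪ -S := by
    rintro y ⟨hy, hyu, hρ⟩
    rw [mem_sphere_zero_iff_norm] at hy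
    rcases le_abs'.1 hyu with hneg | hpos
    · right
      refine mem_inverseGnomonic_image hu (by rwa [norm_neg]) hτ
        (by rw [inner_neg_left]; linarith) ?_
      rwa [inner_neg_left, neg_smul, ← neg_sub', norm_neg]
    · exact .inl (mem_inverseGnomonic_image hu hy hτ hpos hρ)
  have hS : μH[d] S ≤ μH[d] (closedBall (0 : (ℝ ∙ u)ᗮ) (ρ / τ)) := by
    simpa using (lipschitzWith_one_inverseGnomonic hu).hausdorffMeasure_image_le hd
      (closedBall 0 (ρ / τ))
  calc _ ≤ μH[d] (S ∪ -S) := measure_mono hcover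
    _ ≤ μH[d] S + μH[d] (-S) := measure_union_le _ _
    _ = μH[d] S + μH[d] S := by
      rw [← Set.image_neg_eq_neg, isometry_neg.hausdorffMeasure_image (Or.inl hd)]
    _ ≤ _ := by rw [two_mul]; gcongr

theorem hausdorffMeasure_sphere_tube_le {u : E} (hu : ‖u‖ = 1) {ρ d : ℝ} (hρ : ρ ≤ 1 / 2)
    (hd : 0 ≤ d) :
    μH[d] {y ∈ sphere (0 : E) 1 | ‖y - ⟪y, u⟫ • u‖ ≤ ρ}
      ≤ 2 * μH[d] (closedBall (0 : (ℝ ∙ u)ᗮ) (2 * ρ)) := by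
  have htube : {y ∈ sphere (0 : E) 1 | ‖y - ⟪y, u⟫ • u‖ ≤ ρ}
      ⊆ {y ∈ sphere (0 : E) 1 | 1 / 2 ≤ |⟪y, u⟫| ∧ ‖y - ⟪y, u⟫ • u‖ ≤ ρ} := by
    rintro y ⟨hy, hρy⟩
    refine ⟨hy, ?_, hρy⟩
    have hsq := norm_sub_inner_smul_sq hu y
    rw [mem_sphere_zero_iff_norm.1 hy] at hsq
    nlinarith [mul_self_le_mul_self (norm_nonneg _) (hρy.trans hρ), sq_abs ⟪y, u⟫,
      abs_nonneg ⟪y, u⟫]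
  calc _ ≤ _ := measure_mono htube
    _ ≤ _ := hausdorffMeasure_sphere_cap_le hu one_half_pos hd
    _ = _ := by rw [div_div_eq_mul_div, div_one, mul_comm ρ]

theorem isAddHaarMeasure_hausdorffMeasure_orthogonal [FiniteDimensional ℝ E] {n : ℕ}
    (hE : finrank ℝ E = n + 1) {u : E} (hu : u ≠ 0) :
    (μH[n] : Measure (ℝ ∙ u)ᗮ).IsAddHaarMeasure := by
  have : Fact (finrank ℝ E = n + 1) := ⟨hE⟩
  rw [← Submodule.finrank_orthogonal_span_singleton (𝕜 := ℝ) (n := n) hu]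
  infer_instance

theorem hausdorffMeasure_sphere_lt_top [FiniteDimensional ℝ E] {n : ℕ}
    (hE : finrank ℝ E = n + 1) : μH[n] (sphere (0 : E) 1) < ∞ := by
  let b := (stdOrthonormalBasis ℝ E).reindex (finCongr hE)
  have hb : ∀ i, ‖b i‖ = 1 := b.orthonormal.1
  have hcover : sphere (0 : E) 1
      ⊆ ⋃ i, {y ∈ sphere (0 : E) 1 | 1 / (n + 1) ≤ |⟪y, b i⟫| ∧ ‖y - ⟪y, b i⟫ • b i‖ ≤ 1} := by
    intro y hy
    have hy1 := mem_sphere_zero_iff_norm.1 hy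
    obtain ⟨i, -, hi⟩ := Finset.exists_le_of_sum_le Finset.univ_nonempty
      (f := fun _ => (1 / (n + 1) : ℝ)) (g := fun i => ⟪y, b i⟫ ^ 2) <| by
        rw [b.sum_sq_inner_left, hy1]
        simp [mul_inv_cancel₀ (n.cast_add_one_ne_zero (R := ℝ))]
    have habs : |⟪y, b i⟫| ≤ 1 := by
      simpa [hy1, hb i] using abs_real_inner_le_norm y (b i)
    refine Set.mem_iUnion.2 ⟨i, hy, ?_, ?_⟩
    · -- `⟪y, b i⟫ ^ 2 ≤ |⟪y, b i⟫|` because `|⟪y, b i⟫| ≤ 1`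
      rw [← sq_abs] at hi
      nlinarith [abs_nonneg ⟪y, b i⟫]
    · have hsq := norm_sub_inner_smul_sq (hb i) y
      rw [hy1] at hsq
      nlinarith [norm_nonneg (y - ⟪y, b i⟫ • b i), sq_nonneg ⟪y, b i⟫]
  refine (measure_mono hcover).trans_lt <| (measure_iUnion_fintype_le _ _).trans_lt <|
    ENNReal.sum_lt_top.2 fun i _ => ?_
  have := isAddHaarMeasure_hausdorffMeasure_orthogonal hE (b.orthonormal.ne_zero i)
  refine (hausdorffMeasure_sphere_cap_le (hb i) (by positivity) n.cast_nonneg).trans_lt ?_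
  exact ENNReal.mul_lt_top ENNReal.ofNat_lt_top measure_closedBall_lt_top

theorem hausdorffMeasure_sphere_tube_le_pow [FiniteDimensional ℝ E] {n : ℕ}
    (hE : finrank ℝ E = n + 1) {u : E} (hu : ‖u‖ = 1) {ρ : ℝ} (hρ : 0 ≤ ρ) :
    μH[n] {y ∈ sphere (0 : E) 1 | ‖y - ⟪y, u⟫ • u‖ ≤ ρ}
      ≤ ENNReal.ofReal ((2 * ρ) ^ n)
        * (2 * μH[n] (ball (0 : (ℝ ∙ u)ᗮ) 1) + μH[n] (sphere (0 : E) 1)) := by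
  rcases le_or_gt ρ (1 / 2) with hsmall | hlarge
  · have hu0 : u ≠ 0 := by rintro rfl; simp at hu
    have := isAddHaarMeasure_hausdorffMeasure_orthogonal hE hu0
    have : Fact (finrank ℝ E = n + 1) := ⟨hE⟩
    have hfin : finrank ℝ (ℝ ∙ u)ᗮ = n := Submodule.finrank_orthogonal_span_singleton hu0
    calc _ ≤ 2 * μH[n] (closedBall (0 : (ℝ ∙ u)ᗮ) (2 * ρ)) :=
          hausdorffMeasure_sphere_tube_le hu hsmall n.cast_nonneg
      _ = ENNReal.ofReal ((2 * ρ) ^ n) * (2 * μH[n] (ball (0 : (ℝ ∙ u)ᗮ) 1)) := by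
          rw [Measure.addHaar_closedBall _ _ (by positivity), hfin, mul_left_comm]
      _ ≤ _ := by gcongr; exact le_self_add
  · calc _ ≤ μH[n] (sphere (0 : E) 1) := measure_mono (Set.sep_subset _ _)
      _ ≤ ENNReal.ofReal ((2 * ρ) ^ n) * μH[n] (sphere (0 : E) 1) :=
          le_mul_of_one_le_left' (ENNReal.one_le_ofReal.2 (one_le_pow₀ (by linarith)))
      _ ≤ _ := by gcongr; exact le_add_self

theorem exists_hausdorffMeasure_sphere_tube_le [FiniteDimensional ℝ E] {n : ℕ}
    (hE : finrank ℝ E = n + 1) {u : E} (hu : ‖u‖ = 1) :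
    ∃ C : ℝ, 0 < C ∧ ∀ ρ : ℝ, 0 ≤ ρ →
      μH[n] {y ∈ sphere (0 : E) 1 | ‖y - ⟪y, u⟫ • u‖ ≤ ρ} ≤ ENNReal.ofReal (C * ρ ^ n) := by
  have := isAddHaarMeasure_hausdorffMeasure_orthogonal hE (u := u) (by rintro rfl; simp at hu)
  set W := 2 * μH[n] (ball (0 : (ℝ ∙ u)ᗮ) 1) + μH[n] (sphere (0 : E) 1)
  have hW : W ≠ ∞ := ENNReal.add_ne_top.2
    ⟨ENNReal.mul_ne_top ENNReal.ofNat_ne_top measure_ball_lt_top.ne,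
      (hausdorffMeasure_sphere_lt_top hE).ne⟩
  have hW0 : W ≠ 0 := (add_pos_of_pos_of_nonneg
    (ENNReal.mul_pos two_ne_zero (measure_ball_pos _ _ one_pos).ne') zero_le).ne'
  refine ⟨2 ^ n * W.toReal, by positivity [ENNReal.toReal_pos hW0 hW], fun ρ hρ => ?_⟩
  calc _ ≤ ENNReal.ofReal ((2 * ρ) ^ n) * W := hausdorffMeasure_sphere_tube_le_pow hE hu hρ
    _ = _ := by
      rw [← ENNReal.ofReal_toReal hW, ← ENNReal.ofReal_mul (by positivity), ENNReal.toReal_ofReal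
        ENNReal.toReal_nonneg, mul_pow]
      ring_nf

/-- **Direction-measure bound (5.1)** (`d ≥ 2`, written as `d = m + 2`): if `T` is the
closed infinite cylinder of radius `M` about the first coordinate axis in `ℝ^{m+2}`,
there is a constant `C > 0` depending only on `M` and the dimension such that for every
`x ∈ T` and every `h ≥ 1`, the `(m+1)`-dimensional Hausdorff measure of the set of
directions `s` on the unit sphere with `x + h s ∈ T` is at most `C h^{-(m+1)}`. -/
theorem direction_measure_bound_cylinder
    (m : ℕ) (M : ℝ) (hM : 0 < M)
    (T : Set (EuclideanSpace ℝ (Fin (m + 2))))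
    (hT : T = {y : EuclideanSpace ℝ (Fin (m + 2)) |
      ‖y - y 0 • EuclideanSpace.single (0 : Fin (m + 2)) (1 : ℝ)‖ ≤ M}) :
    ∃ C : ℝ, 0 < C ∧ ∀ x ∈ T, ∀ h : ℝ, 1 ≤ h →
      (μH[(m + 1 : ℝ)] {s : Metric.sphere (0 : EuclideanSpace ℝ (Fin (m + 2))) 1 |
          x + h • (s : EuclideanSpace ℝ (Fin (m + 2))) ∈ T})
        ≤ ENNReal.ofReal (C / h ^ (m + 1)) := by
  set u : EuclideanSpace ℝ (Fin (m + 2)) := EuclideanSpace.single 0 1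
  have hT' : T = {y | ‖y - ⟪y, u⟫ • u‖ ≤ M} := by
    simp [hT, u, EuclideanSpace.inner_single_right]
  obtain ⟨C, hC, htube⟩ := exists_hausdorffMeasure_sphere_tube_le (n := m + 1)
    (E := EuclideanSpace ℝ (Fin (m + 2))) (by simp) (u := u) (by simp [u])
  refine ⟨C * (2 * M) ^ (m + 1), by positivity, fun x hx h hh => ?_⟩
  have hh0 : 0 < h := by linarith
  rw [← isometry_subtype_coe.hausdorffMeasure_image (Or.inl (by positivity)),
    show (m + 1 : ℝ) = (m + 1 : ℕ) by push_cast; ring]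
  calc _ ≤ μH[(m + 1 : ℕ)] {y ∈ sphere 0 1 | ‖y - ⟪y, u⟫ • u‖ ≤ 2 * M / h} := by
        refine measure_mono ?_
        rintro _ ⟨s, hs, rfl⟩
        rw [hT'] at hx hs
        exact ⟨s.2, norm_sub_inner_smul_le_of_add_smul hh0 hx hs⟩
    _ ≤ ENNReal.ofReal (C * (2 * M / h) ^ (m + 1)) := htube _ (by positivity)
    _ = _ := by rw [div_pow, mul_div_assoc]
end
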